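/- arXiv:1411.2006 — 4 statements merged into one kernel-verified Lean document; each statement's English description precedes it below -/
import Mathlib

section
/- Let M be an n×n matrix with integer entries and determinant 1 or −1 which is hyperbolic, i.e. no root in ℂ of its characteristic polynomial has absolute value 1. If α and β are complex eigenvalues of M such that D(α) and D(β) are relatively prime, then D(αβ) is not a prime number. -/
/-!
Write `a = D(α)`, `b = D(β)`, `m = D(αβ)` and `K = ℚ(β)`. Since `a` divides
`[K(α) : ℚ] = b · [K(α) : K]` and is coprime to `b`, `α` still has degree `a` over `K`;
so `[ℚ(α, β) : ℚ] = ab` and `m ∣ ab`. If `m` is prime it divides `a`, say. The minimal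
polynomial of `αβ` over `K` is that of `α` with its roots scaled by `β`; it has degree
`a ≥ m`, so it is the minimal polynomial of `αβ` over `ℚ`, and comparing constant terms puts
`β ^ a` in `ℚ`. Eigenvalues of a unimodular integer matrix are units of the ring of algebraic
integers, so `β ^ a = ±1` and `|β| = 1`, against hyperbolicity.
-/
open Polynomial IntermediateField Module

section Tower

variable {F K E : Type*} [Field F] [Field K] [Field E] [Algebra F K] [Algebra K E] [Algebra F E]
  [IsScalarTower F K E]

theorem minpoly.natDegree_le_of_isScalarTower {x : E} (hx : IsIntegral F x) :
    (minpoly K x).natDegree ≤ (minpoly F x).natDegree := by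
  simpa using natDegree_le_of_dvd (minpoly.dvd_map_of_isScalarTower F K x)
    ((minpoly.monic hx).map (algebraMap F K)).ne_zero

theorem minpoly.map_algebraMap_of_natDegree_le {x : E} (hx : IsIntegral F x)
    (h : (minpoly F x).natDegree ≤ (minpoly K x).natDegree) :
    (minpoly F x).map (algebraMap F K) = minpoly K x :=
  eq_of_monic_of_dvd_of_natDegree_le (minpoly.monic hx.tower_top) ((minpoly.monic hx).map _)
    (minpoly.dvd_map_of_isScalarTower F K x) (by rwa [natDegree_map])

theorem minpoly.exists_algebraMap_eq_pow_of_natDegree_smul_le {x : E} {b : K}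
    (hx : IsIntegral F x) (hbx : IsIntegral F (b • x)) (hx0 : x ≠ 0) (hb0 : b ≠ 0)
    (hxK : (minpoly F x).natDegree ≤ (minpoly K x).natDegree)
    (hbxK : (minpoly F (b • x)).natDegree ≤ (minpoly K x).natDegree) :
    ∃ q : F, algebraMap F K q = b ^ (minpoly F x).natDegree := by
  have hsmul : minpoly K (b • x) = (minpoly K x).scaleRoots b :=
    IsIntegrallyClosed.minpoly_smul hb0 hx.tower_top
  have hmap_x := minpoly.map_algebraMap_of_natDegree_le hx hxK
  have hmap_bx : (minpoly F (b • x)).map (algebraMap F K) = minpoly K (b • x) :=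
    minpoly.map_algebraMap_of_natDegree_le hbx (by rw [hsmul, natDegree_scaleRoots]; exact hbxK)
  -- constant terms: `c(b • x) = c(x) * b ^ d`, with both `c`'s in `F`
  have hcoeff := congrArg (coeff · 0) (hmap_bx.trans hsmul)
  simp only [coeff_map, coeff_scaleRoots, Nat.sub_zero, ← hmap_x, natDegree_map] at hcoeff
  refine ⟨(minpoly F (b • x)).coeff 0 / (minpoly F x).coeff 0, ?_⟩
  rw [map_div₀, hcoeff, mul_div_cancel_left₀]
  exact (_root_.map_ne_zero _).mpr (minpoly.coeff_zero_ne_zero hx hx0)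

end Tower

section Adjoin

variable {F E : Type*} [Field F] [Field E] [Algebra F E] {α β : E}

theorem IntermediateField.finrank_adjoin_pair (hα : IsIntegral F α) (hβ : IsIntegral F β) :
    finrank F F⟮β, α⟯ = (minpoly F β).natDegree * (minpoly F⟮β⟯ α).natDegree := by
  have : FiniteDimensional F F⟮β⟯ := adjoin.finiteDimensional hβ
  rw [← adjoin_simple_adjoin_simple, ← adjoin.finrank hβ, ← adjoin.finrank hα.tower_top]
  exact (finrank_mul_finrank F F⟮β⟯ F⟮β⟯⟮α⟯).symm

theorem minpoly.natDegree_dvd_of_mem_adjoin_pair (hα : IsIntegral F α) (hβ : IsIntegral F β)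
    {x : E} (hx : x ∈ F⟮β, α⟯) :
    (minpoly F x).natDegree ∣ (minpoly F β).natDegree * (minpoly F⟮β⟯ α).natDegree := by
  have : FiniteDimensional F F⟮β, α⟯ := finiteDimensional_adjoin (by simp [hα, hβ])
  rw [← IntermediateField.finrank_adjoin_pair hα hβ, ← minpoly_eq ⟨x, hx⟩]
  exact minpoly.degree_dvd (.of_finite F _)

theorem minpoly.natDegree_adjoin_eq_of_coprime (hα : IsIntegral F α) (hβ : IsIntegral F β)
    (hcop : (minpoly F α).natDegree.Coprime (minpoly F β).natDegree) :
    (minpoly F⟮β⟯ α).natDegree = (minpoly F α).natDegree := by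
  have hαK : IsIntegral F⟮β⟯ α := hα.tower_top
  have hdvd := minpoly.natDegree_dvd_of_mem_adjoin_pair hα hβ
    (subset_adjoin F _ (Set.mem_insert_of_mem _ rfl))
  exact (minpoly.natDegree_le_of_isScalarTower hα).antisymm
    (Nat.le_of_dvd (minpoly.natDegree_pos hαK) (hcop.dvd_of_dvd_mul_left hdvd))

theorem minpoly.natDegree_mul_dvd_of_coprime (hα : IsIntegral F α) (hβ : IsIntegral F β)
    (hcop : (minpoly F α).natDegree.Coprime (minpoly F β).natDegree) :
    (minpoly F (α * β)).natDegree ∣ (minpoly F α).natDegree * (minpoly F β).natDegree := by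
  have hmem : α * β ∈ F⟮β, α⟯ := mul_mem (subset_adjoin F _ (Set.mem_insert_of_mem _ rfl))
    (subset_adjoin F _ (Set.mem_insert _ _))
  have := minpoly.natDegree_dvd_of_mem_adjoin_pair hα hβ hmem
  rwa [minpoly.natDegree_adjoin_eq_of_coprime hα hβ hcop, Nat.mul_comm] at this

theorem minpoly.exists_algebraMap_eq_pow_of_coprime (hα : IsIntegral F α) (hβ : IsIntegral F β)
    (hα0 : α ≠ 0) (hβ0 : β ≠ 0)
    (hcop : (minpoly F α).natDegree.Coprime (minpoly F β).natDegree)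
    (hdvd : (minpoly F (α * β)).natDegree ∣ (minpoly F α).natDegree) :
    ∃ q : F, algebraMap F E q = β ^ (minpoly F α).natDegree := by
  set b : F⟮β⟯ := AdjoinSimple.gen F β
  have hb0 : b ≠ 0 := fun h ↦ hβ0 (congrArg Subtype.val h)
  have hbα : b • α = α * β := by rw [Algebra.smul_def, mul_comm]; rfl
  have hd := minpoly.natDegree_adjoin_eq_of_coprime hα hβ hcop
  obtain ⟨q, hq⟩ := minpoly.exists_algebraMap_eq_pow_of_natDegree_smul_le hα
    (hbα ▸ hα.mul hβ) hα0 hb0 hd.ge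
    (hbα ▸ hd ▸ Nat.le_of_dvd (minpoly.natDegree_pos hα) hdvd)
  refine ⟨q, ?_⟩
  rw [IsScalarTower.algebraMap_apply F F⟮β⟯ E, hq, map_pow]
  rfl

end Adjoin

section Units

variable {R A : Type*} [CommRing R] {p : R[X]}

theorem Matrix.isUnit_charpoly_coeff_zero {n : Type*} [Fintype n] [DecidableEq n]
    {M : Matrix n n R} (h : IsUnit M.det) : IsUnit (M.charpoly.coeff 0) := by
  rw [M.det_eq_sign_charpoly_coeff] at h
  exact isUnit_of_mul_isUnit_right h

theorem ne_zero_of_aeval_eq_zero_of_isUnit_coeff_zero [Ring A] [Nontrivial A] [Algebra R A]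
    (h0 : IsUnit (p.coeff 0)) {x : A} (hx : aeval x p = 0) : x ≠ 0 := by
  rintro rfl
  rw [← coeff_zero_eq_aeval_zero'] at hx
  exact (h0.map _).ne_zero hx

theorem isIntegral_inv_of_aeval_eq_zero [Field A] [Algebra R A] (hp : p.Monic)
    (h0 : IsUnit (p.coeff 0)) {x : A} (hx : aeval x p = 0) : IsIntegral R x⁻¹ := by
  obtain ⟨u, hu⟩ := h0
  have hroot := congrArg (aeval x) (X_mul_divX_add p)
  simp only [map_add, map_mul, aeval_X, aeval_C, hx, ← hu] at hroot
  have hinv : x⁻¹ = aeval x (C (-↑u⁻¹ : R) * p.divX) := by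
    refine (eq_inv_of_mul_eq_one_right ?_).symm
    rw [map_mul, aeval_C, mul_left_comm, eq_neg_of_add_eq_zero_left hroot, map_neg, neg_mul_neg,
      ← map_mul, Units.inv_mul, map_one]
  rw [hinv]
  exact adjoin_le_integralClosure ⟨p, hp, by rwa [aeval_def] at hx⟩
    (aeval_mem_adjoin_singleton R x)

end Units

theorem Complex.norm_eq_one_of_pow_eq_algebraMap {x : ℂ} (hx0 : x ≠ 0) (hx : IsIntegral ℤ x)
    (hx' : IsIntegral ℤ x⁻¹) {k : ℕ} (hk : k ≠ 0) {q : ℚ} (hq : algebraMap ℚ ℂ q = x ^ k) :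
    ‖x‖ = 1 := by
  have hq0 : q ≠ 0 := by
    rintro rfl
    rw [map_zero, eq_comm, pow_eq_zero_iff hk] at hq
    exact hx0 hq
  have hqZ : IsIntegral ℤ q :=
    (isIntegral_algebraMap_iff (algebraMap ℚ ℂ).injective).mp (hq ▸ hx.pow k)
  have hqZ' : IsIntegral ℤ q⁻¹ :=
    (isIntegral_algebraMap_iff (algebraMap ℚ ℂ).injective).mp
      (by rw [map_inv₀, hq, ← inv_pow]; exact hx'.pow k)
  obtain ⟨z, rfl⟩ := IsIntegrallyClosed.isIntegral_iff.mp hqZ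
  obtain ⟨w, hw⟩ := IsIntegrallyClosed.isIntegral_iff.mp hqZ'
  have hzw : z * w = 1 :=
    FaithfulSMul.algebraMap_injective ℤ ℚ (by rw [map_mul, hw, mul_inv_cancel₀ hq0, map_one])
  have hz : |(z : ℝ)| = 1 := by exact_mod_cast Int.isUnit_iff_abs_eq.mp (.of_mul_eq_one _ hzw)
  rw [← pow_eq_one_iff_of_nonneg (norm_nonneg x) hk, ← norm_pow, ← hq]
  simpa using hz

/-- Let `M` be an `n × n` integer matrix with determinant `±1` which is hyperbolic (no
complex root of its characteristic polynomial has absolute value `1`). If `α` and `β` are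
complex eigenvalues of `M` whose minimal polynomials over `ℚ` have coprime degrees, then
the degree of the minimal polynomial of `α * β` is not a prime number. -/
theorem degree_of_product_not_prime (n : ℕ) (M : Matrix (Fin n) (Fin n) ℤ)
    (hdet : M.det = 1 ∨ M.det = -1)
    (hhyp : ∀ z : ℂ, (aeval z) M.charpoly = 0 → ‖z‖ ≠ 1)
    (α β : ℂ) (hα : (aeval α) M.charpoly = 0) (hβ : (aeval β) M.charpoly = 0)
    (hcop : Nat.Coprime (minpoly ℚ α).natDegree (minpoly ℚ β).natDegree) :
    ¬ Nat.Prime (minpoly ℚ (α * β)).natDegree := by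
  intro hprime
  have hunit : IsUnit (M.charpoly.coeff 0) :=
    Matrix.isUnit_charpoly_coeff_zero (by rcases hdet with h | h <;> simp [h])
  have hintegral {x : ℂ} (hx : aeval x M.charpoly = 0) : IsIntegral ℤ x :=
    ⟨M.charpoly, M.charpoly_monic, by rwa [aeval_def] at hx⟩
  have hnorm {x y : ℂ} (hx : aeval x M.charpoly = 0) (hy : aeval y M.charpoly = 0)
      (hcop : (minpoly ℚ x).natDegree.Coprime (minpoly ℚ y).natDegree)
      (hdvd : (minpoly ℚ (x * y)).natDegree ∣ (minpoly ℚ x).natDegree) : ‖y‖ = 1 := by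
    have hxℚ : IsIntegral ℚ x := (hintegral hx).tower_top
    have hy0 := ne_zero_of_aeval_eq_zero_of_isUnit_coeff_zero hunit hy
    obtain ⟨q, hq⟩ := minpoly.exists_algebraMap_eq_pow_of_coprime hxℚ (hintegral hy).tower_top
      (ne_zero_of_aeval_eq_zero_of_isUnit_coeff_zero hunit hx) hy0 hcop hdvd
    exact Complex.norm_eq_one_of_pow_eq_algebraMap hy0 (hintegral hy)
      (isIntegral_inv_of_aeval_eq_zero M.charpoly_monic hunit hy)
      (minpoly.natDegree_pos hxℚ).ne' hq
  rcases hprime.dvd_mul.mp (minpoly.natDegree_mul_dvd_of_coprime (hintegral hα).tower_top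
    (hintegral hβ).tower_top hcop) with h | h
  · exact hhyp β hβ (hnorm hα hβ hcop h)
  · exact hhyp α hα (hnorm hβ hα hcop.symm (by rwa [mul_comm]))
end

section
/- Let 𝔫 be a rational nilpotent Anosov Lie algebra of nilpotency class r ≥ 2. Then the quotient Lie algebra 𝔫 / C^{r-1}(𝔫) is an Anosov Lie algebra. -/
open Polynomial
open scoped TensorProduct

/-- An endomorphism of a finite-dimensional vector space over a subfield `K` of `ℂ` is
*hyperbolic* if no root in `ℂ` of its characteristic polynomial has absolute value `1`. -/
def IsHyperbolicEnd {K L : Type*} [Field K] [Algebra K ℂ] [AddCommGroup L] [Module K L]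
    [Module.Finite K L] (τ : L →ₗ[K] L) : Prop :=
  ∀ z : ℂ, (aeval z) (LinearMap.charpoly τ) = 0 → ‖z‖ ≠ 1

/-- An endomorphism is *unimodular* if there is a basis in which its matrix has integer
entries and determinant `±1`. -/
def IsUnimodularEnd {K L : Type*} [Field K] [AddCommGroup L] [Module K L]
    (τ : L →ₗ[K] L) : Prop :=
  ∃ (n : ℕ) (bas : Module.Basis (Fin n) K L) (A : Matrix (Fin n) (Fin n) ℤ),
    (∀ i j, LinearMap.toMatrix bas bas τ i j = (A i j : K)) ∧ (A.det = 1 ∨ A.det = -1)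

/-- A rational Lie algebra is *Anosov* if it admits a hyperbolic unimodular automorphism. -/
def IsAnosovRat (L : Type*) [LieRing L] [LieAlgebra ℚ L] [Module.Finite ℚ L] : Prop :=
  ∃ τ : L ≃ₗ⁅ℚ⁆ L, IsHyperbolicEnd τ.toLieHom.toLinearMap ∧
    IsUnimodularEnd τ.toLieHom.toLinearMap

/-- A real Lie algebra is *Anosov* if it has a rational form which is Anosov. -/
def IsAnosovReal (L : Type*) [LieRing L] [LieAlgebra ℝ L] : Prop :=
  ∃ (n₀ : Type) (_ : LieRing n₀) (_ : LieAlgebra ℚ n₀) (_ : Module.Finite ℚ n₀),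
    IsAnosovRat n₀ ∧ Nonempty (L ≃ₗ⁅ℝ⁆ ℝ ⊗[ℚ] n₀)

/-- A complex Lie algebra is *Anosov* if it has a rational form which is Anosov. -/
def IsAnosovComplex (L : Type*) [LieRing L] [LieAlgebra ℂ L] : Prop :=
  ∃ (n₀ : Type) (_ : LieRing n₀) (_ : LieAlgebra ℚ n₀) (_ : Module.Finite ℚ n₀),
    IsAnosovRat n₀ ∧ Nonempty (L ≃ₗ⁅ℂ⁆ ℂ ⊗[ℚ] n₀)

/-!
An automorphism `τ` of `L` preserves every term of the lower central series, so it descends to an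
automorphism `τ'` of the quotient, intertwined with `τ` by the quotient map. Hence the
characteristic polynomial of `τ` annihilates `τ'`, and every complex eigenvalue of `τ'` is a root
of it: `τ'` is hyperbolic. An automorphism of a rational vector space is unimodular exactly when it
maps some full lattice (a finitely generated `ℤ`-submodule spanning over `ℚ`) onto itself; the
image in the quotient of a lattice preserved by `τ` is a full lattice preserved by `τ'`.
-/

section Quotient

variable {R L L' : Type*} [CommRing R] [LieRing L] [LieAlgebra R L] [LieRing L'] [LieAlgebra R L']

noncomputable def LieEquiv.quotientCongr (e : L ≃ₗ⁅R⁆ L') (I : LieIdeal R L) (J : LieIdeal R L')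
    (h : I.toSubmodule.map (e.toLieHom : L →ₗ[R] L') = J.toSubmodule) :
    (L ⧸ I) ≃ₗ⁅R⁆ (L' ⧸ J) :=
  let ε : (L ⧸ I) ≃ₗ[R] (L' ⧸ J) :=
    Submodule.Quotient.equiv I.toSubmodule J.toSubmodule e.toLinearEquiv h
  { toFun := ε
    map_add' := ε.map_add
    map_smul' := ε.map_smul
    map_lie' := by
      rintro ⟨x⟩ ⟨y⟩
      change LieSubmodule.Quotient.mk' J (e ⁅x, y⁆) =
        ⁅LieSubmodule.Quotient.mk' J (e x), LieSubmodule.Quotient.mk' J (e y)⁆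
      rw [e.map_lie]
      rfl
    invFun := ε.symm
    left_inv := ε.left_inv
    right_inv := ε.right_inv }

theorem LieEquiv.quotientCongr_comp_mkQ (e : L ≃ₗ⁅R⁆ L') (I : LieIdeal R L) (J : LieIdeal R L')
    (h : I.toSubmodule.map (e.toLieHom : L →ₗ[R] L') = J.toSubmodule) :
    J.toSubmodule.mkQ ∘ₗ e.toLieHom.toLinearMap =
      (e.quotientCongr I J h).toLieHom.toLinearMap ∘ₗ I.toSubmodule.mkQ :=
  rfl

end Quotient

theorem LinearMap.comp_aeval_eq_aeval_comp {R M N : Type*} [CommRing R] [AddCommGroup M]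
    [Module R M] [AddCommGroup N] [Module R N] {f : Module.End R M} {g : Module.End R N}
    {π : M →ₗ[R] N} (h : π ∘ₗ f = g ∘ₗ π) (p : R[X]) : π ∘ₗ aeval f p = aeval g p ∘ₗ π := by
  induction p using Polynomial.induction_on' with
  | add p q hp hq => simp only [map_add, LinearMap.comp_add, LinearMap.add_comp, hp, hq]
  | monomial n a =>
    have hpow := Module.End.commute_pow_left_of_commute h.symm n
    simp only [aeval_monomial, Module.algebraMap_end_eq_smul_id, Module.End.mul_eq_comp,
      LinearMap.smul_comp, LinearMap.comp_smul, LinearMap.id_comp, hpow]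

theorem Module.End.aeval_eq_zero_of_aeval_charpoly_eq_zero {K V A : Type*} [Field K]
    [AddCommGroup V] [Module K V] [FiniteDimensional K V] [CommRing A] [IsDomain A] [Algebra K A]
    (f : Module.End K V) {p : K[X]} (hp : aeval f p = 0) {z : A} (hz : aeval z f.charpoly = 0) :
    aeval z p = 0 := by
  set fA := f.baseChange A
  have hroot : fA.charpoly.IsRoot z := by
    rwa [LinearMap.charpoly_baseChange, IsRoot, eval_map_algebraMap]
  obtain ⟨v, hv⟩ := ((hasEigenvalue_iff_isRoot_charpoly fA z).mpr hroot).exists_hasEigenvector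
  have hpA : aeval fA p = 0 := by
    rw [show fA = baseChangeHom K A V f from rfl, aeval_algHom_apply, hp, map_zero]
  have hpv := aeval_apply_of_hasEigenvector (p := p.map (algebraMap K A)) hv
  rw [aeval_map_algebraMap, hpA, LinearMap.zero_apply, eval_map_algebraMap] at hpv
  exact (smul_eq_zero.mp hpv.symm).resolve_right hv.2

theorem IsHyperbolicEnd.of_comp_eq {K V W : Type*} [Field K] [Algebra K ℂ] [AddCommGroup V]
    [Module K V] [FiniteDimensional K V] [AddCommGroup W] [Module K W] [FiniteDimensional K W]
    {f : Module.End K V} {g : Module.End K W} {π : V →ₗ[K] W} (hπ : Function.Surjective π)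
    (h : π ∘ₗ f = g ∘ₗ π) (hf : IsHyperbolicEnd f) : IsHyperbolicEnd g := by
  intro z hz
  refine hf z (g.aeval_eq_zero_of_aeval_charpoly_eq_zero ?_ hz)
  have hcomp := LinearMap.comp_aeval_eq_aeval_comp h f.charpoly
  rw [LinearMap.aeval_self_charpoly, LinearMap.comp_zero] at hcomp
  exact (LinearMap.cancel_right hπ).mp (hcomp.symm.trans (LinearMap.zero_comp π).symm)

section Unimodular

open Module

namespace Module.Basis

variable {ι V : Type*} [AddCommGroup V] [Module ℚ V] {Λ : Submodule ℤ V}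

noncomputable def ofLattice (hΛ : Submodule.span ℚ (Λ : Set V) = ⊤) (b : Basis ι ℤ Λ) :
    Basis ι ℚ V :=
  .mk ((LinearIndependent.iff_fractionRing ℤ ℚ).mp
      (b.linearIndependent.map' Λ.subtype Λ.ker_subtype))
    (by
      rw [← Submodule.span_span_of_tower ℤ, Set.range_comp, Submodule.span_image, b.span_eq,
        Submodule.map_top, Submodule.range_subtype, hΛ])

@[simp]
theorem ofLattice_apply (hΛ : Submodule.span ℚ (Λ : Set V) = ⊤) (b : Basis ι ℤ Λ) (i : ι) :
    ofLattice hΛ b i = b i :=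
  mk_apply ..

theorem ofLattice_repr_coe [Fintype ι] (hΛ : Submodule.span ℚ (Λ : Set V) = ⊤)
    (b : Basis ι ℤ Λ) (x : Λ) (i : ι) : (ofLattice hΛ b).repr x i = b.repr x i := by
  have hx : (x : V) = ∑ i, (b.repr x i : ℚ) • ofLattice hΛ b i :=
    calc (x : V) = ((∑ i, b.repr x i • b i : Λ) : V) := by rw [b.sum_repr]
      _ = _ := by
        simp only [Submodule.coe_sum, Submodule.coe_smul, ofLattice_apply, Int.cast_smul_eq_zsmul]
  rw [hx, repr_sum_self]

theorem toMatrix_ofLattice [Fintype ι] [DecidableEq ι] (hΛ : Submodule.span ℚ (Λ : Set V) = ⊤)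
    (b : Basis ι ℤ Λ) (f : V →ₗ[ℚ] V) (hf : ∀ x ∈ Λ, f x ∈ Λ) :
    LinearMap.toMatrix (ofLattice hΛ b) (ofLattice hΛ b) f =
      (LinearMap.toMatrix b b ((f.restrictScalars ℤ).restrict hf)).map Int.cast := by
  ext i j
  rw [LinearMap.toMatrix_apply, Matrix.map_apply, LinearMap.toMatrix_apply,
    ← ofLattice_repr_coe hΛ, ofLattice_apply]
  rfl

end Module.Basis

variable {V : Type*} [AddCommGroup V] [Module ℚ V]

theorem isUnimodularEnd_of_map_eq (Λ : Submodule ℤ V) [Module.Finite ℤ Λ]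
    (hΛ : Submodule.span ℚ (Λ : Set V) = ⊤) (f : V ≃ₗ[ℚ] V)
    (hf : Λ.map (f.restrictScalars ℤ : V →ₗ[ℤ] V) = Λ) : IsUnimodularEnd (f : V →ₗ[ℚ] V) := by
  have : IsTorsionFree ℤ V := IsTorsionFree.trans ℚ
  let b := finBasis ℤ Λ
  let F : Λ ≃ₗ[ℤ] Λ := (f.restrictScalars ℤ).ofSubmodules Λ Λ hf
  have hmaps : ∀ x ∈ Λ, f x ∈ Λ := fun x hx => hf ▸ Submodule.mem_map_of_mem hx
  refine ⟨_, Basis.ofLattice hΛ b, LinearMap.toMatrix b b F, fun i j => ?_, ?_⟩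
  · rw [Basis.toMatrix_ofLattice hΛ b _ hmaps]
    rfl
  · rw [← Int.isUnit_iff, LinearMap.det_toMatrix]
    exact F.isUnit_det'

theorem IsUnimodularEnd.exists_lattice_map_eq {f : V ≃ₗ[ℚ] V}
    (hf : IsUnimodularEnd (f : V →ₗ[ℚ] V)) :
    ∃ Λ : Submodule ℤ V, Module.Finite ℤ Λ ∧ Submodule.span ℚ (Λ : Set V) = ⊤ ∧
      Λ.map (f.restrictScalars ℤ : V →ₗ[ℤ] V) = Λ := by
  obtain ⟨n, B, A, hA, hdet⟩ := hf
  set Λ := Submodule.span ℤ (Set.range B)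
  have hΛ : Submodule.span ℚ (Λ : Set V) = ⊤ := by
    rw [Submodule.span_span_of_tower, B.span_eq]
  have hmaps : ∀ x ∈ Λ, f x ∈ Λ := fun x hx => by
    refine Submodule.span_le (p := Λ.comap (f.restrictScalars ℤ : V →ₗ[ℤ] V)) |>.mpr
      (Set.range_subset_iff.mpr fun j => ?_) hx
    change f (B j) ∈ Λ
    rw [← LinearEquiv.coe_coe, ← Matrix.toLin_toMatrix B B (f : V →ₗ[ℚ] V), Matrix.toLin_self]
    refine Submodule.sum_mem _ fun i _ => ?_
    rw [hA, Int.cast_smul_eq_zsmul]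
    exact Submodule.smul_mem _ _ (Submodule.subset_span ⟨i, rfl⟩)
  let F := (f.restrictScalars ℤ : V →ₗ[ℤ] V).restrict hmaps
  let bΛ : Basis (Fin n) ℤ Λ :=
    .span ((LinearIndependent.iff_fractionRing ℤ ℚ).mpr B.linearIndependent)
  have := Module.Finite.of_basis bΛ
  have := Module.Free.of_basis bΛ
  have hbΛ : Basis.ofLattice hΛ bΛ = B := Basis.eq_of_apply_eq fun i => by
    rw [Basis.ofLattice_apply]
    exact congrArg Subtype.val (Basis.span_apply _ i)
  have hF : LinearMap.toMatrix bΛ bΛ F = A := by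
    refine Matrix.map_injective Int.cast_injective
      ((Basis.toMatrix_ofLattice hΛ bΛ f hmaps).symm.trans ?_)
    ext i j
    rw [hbΛ, hA]
    rfl
  have hF_surj : Function.Surjective F := by
    have hF_unit : IsUnit F := by
      rw [LinearMap.isUnit_iff_isUnit_det, ← LinearMap.det_toMatrix bΛ, hF, Int.isUnit_iff]
      exact hdet
    exact ((End.isUnit_iff F).mp hF_unit).surjective
  refine ⟨Λ, inferInstance, hΛ,
    le_antisymm (Submodule.map_le_iff_le_comap.mpr hmaps) fun y hy => ?_⟩
  obtain ⟨x, hx⟩ := hF_surj ⟨y, hy⟩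
  exact ⟨x, x.2, congrArg Subtype.val hx⟩

theorem IsUnimodularEnd.of_comp_eq {W : Type*} [AddCommGroup W] [Module ℚ W] {f : V ≃ₗ[ℚ] V}
    {g : W ≃ₗ[ℚ] W} {π : V →ₗ[ℚ] W} (hπ : Function.Surjective π)
    (h : π ∘ₗ f = g ∘ₗ π) (hf : IsUnimodularEnd (f : V →ₗ[ℚ] V)) :
    IsUnimodularEnd (g : W →ₗ[ℚ] W) := by
  obtain ⟨Λ, _, hΛ, hfΛ⟩ := hf.exists_lattice_map_eq
  refine isUnimodularEnd_of_map_eq (Λ.map (π.restrictScalars ℤ)) ?_ g ?_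
  · change Submodule.span ℚ (π '' Λ) = ⊤
    rw [Submodule.span_image, hΛ, Submodule.map_top, LinearMap.range_eq_top.mpr hπ]
  · have hℤ : (g.restrictScalars ℤ : W →ₗ[ℤ] W) ∘ₗ π.restrictScalars ℤ =
        π.restrictScalars ℤ ∘ₗ (f.restrictScalars ℤ : V →ₗ[ℤ] V) :=
      LinearMap.ext fun x => (LinearMap.congr_fun h x).symm
    rw [← Submodule.map_comp, hℤ, Submodule.map_comp, hfΛ]

end Unimodular

theorem isAnosovRat_quotient_of_map_eq {L : Type*} [LieRing L] [LieAlgebra ℚ L]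
    [Module.Finite ℚ L] (τ : L ≃ₗ⁅ℚ⁆ L) (hhyp : IsHyperbolicEnd τ.toLieHom.toLinearMap)
    (huni : IsUnimodularEnd τ.toLieHom.toLinearMap) (I : LieIdeal ℚ L)
    (hI : I.toSubmodule.map (τ.toLieHom : L →ₗ[ℚ] L) = I.toSubmodule) : IsAnosovRat (L ⧸ I) :=
  ⟨τ.quotientCongr I I hI,
    hhyp.of_comp_eq (Submodule.mkQ_surjective _) (τ.quotientCongr_comp_mkQ I I hI),
    huni.of_comp_eq (f := τ.toLinearEquiv) (g := (τ.quotientCongr I I hI).toLinearEquiv)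
      (Submodule.mkQ_surjective _) (τ.quotientCongr_comp_mkQ I I hI)⟩

theorem IsAnosovRat.quotient_lowerCentralSeries {L : Type*} [LieRing L] [LieAlgebra ℚ L]
    [Module.Finite ℚ L] (hL : IsAnosovRat L) (k : ℕ) :
    IsAnosovRat (L ⧸ LieModule.lowerCentralSeries ℚ L L k) := by
  obtain ⟨τ, hhyp, huni⟩ := hL
  refine isAnosovRat_quotient_of_map_eq τ hhyp huni _ ?_
  rw [← LieIdeal.coe_map_of_surjective τ.surjective,
    LieIdeal.lowerCentralSeries_map_eq k τ.surjective]

theorem quotient_by_last_lcs_isAnosov_general (L : Type*) [LieRing L] [LieAlgebra ℚ L]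
    [Module.Finite ℚ L] (r : ℕ)
    (hA : IsAnosovRat L) :
    IsAnosovRat (L ⧸ LieModule.lowerCentralSeries ℚ L L (r - 1)) :=
  hA.quotient_lowerCentralSeries (r - 1)

/-- If `L` is a rational nilpotent Anosov Lie algebra of nilpotency class `r ≥ 2`, then the
quotient Lie algebra `L / C^{r-1}(L)` is again an Anosov Lie algebra. -/
theorem quotient_by_last_lcs_isAnosov (L : Type*) [LieRing L] [LieAlgebra ℚ L]
    [Module.Finite ℚ L] (r : ℕ) (hr : 2 ≤ r)
    (hne : LieModule.lowerCentralSeries ℚ L L (r - 1) ≠ ⊥)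
    (hnil : LieModule.lowerCentralSeries ℚ L L r = ⊥)
    (hA : IsAnosovRat L) :
    IsAnosovRat (L ⧸ LieModule.lowerCentralSeries ℚ L L (r - 1)) :=
  quotient_by_last_lcs_isAnosov_general L r hA
end

section
/- Let 𝔫 be a finite-dimensional real Lie algebra. If the complexification ℂ ⊗_ℝ 𝔫 has a nonzero abelian factor, then 𝔫 has a nonzero abelian factor. -/
/-!
Over a field, a Lie algebra `L` has a nonzero abelian factor exactly when its centre is not
contained in `⁅L, L⁆`: a central line avoiding `⁅L, L⁆` splits off against any complementary
subspace containing `⁅L, L⁆`, since both central subspaces and subspaces containing `⁅L, L⁆`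
are ideals. Forming `⁅L, L⁆` commutes with base change, while the centre of `A ⊗ L` lies in
`A ⊗ (centre of L)` because the coordinates of a central element with respect to a basis of `A`
are central. So `centre ≤ ⁅L, L⁆` passes from `L` to `A ⊗ L`.
-/

open scoped TensorProduct

/-- A Lie algebra has a nonzero abelian factor if it is the internal direct sum of an ideal
and a nonzero abelian ideal. -/
def HasAbelianFactor (R L : Type*) [CommRing R] [LieRing L] [LieAlgebra R L] : Prop :=
  ∃ a m : LieIdeal R L, a ≠ ⊥ ∧ (∀ x ∈ a, ∀ y ∈ a, ⁅x, y⁆ = (0 : L)) ∧ m ⊔ a = ⊤ ∧ m ⊓ a = ⊥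

open LieAlgebra LieModule LieSubmodule

section CommRing

variable {R L : Type*} [CommRing R] [LieRing L] [LieAlgebra R L]

theorem HasAbelianFactor.not_center_le_lie_top (h : HasAbelianFactor R L) :
    ¬ center R L ≤ ⁅(⊤ : LieIdeal R L), ⊤⁆ := by
  obtain ⟨a, m, ha, hab, hsup, hinf⟩ := h
  have haa : ⁅a, a⁆ = ⊥ := (lie_eq_bot_iff a a).2 hab
  have hma : ⁅m, a⁆ = ⊥ := eq_bot_iff.2 (hinf ▸ lie_le_inf m a)
  have ha_center : a ≤ center R L := by
    rw [le_max_triv_iff_bracket_eq_bot, ← hsup, sup_lie, hma, haa, sup_bot_eq]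
  have hlie_top : ⁅(⊤ : LieIdeal R L), ⊤⁆ ≤ m :=
    calc ⁅(⊤ : LieIdeal R L), ⊤⁆ = ⁅⊤, m⁆ ⊔ ⁅⊤, a⁆ := by rw [← lie_sup, hsup]
      _ = ⁅⊤, m⁆ := by rw [(le_max_triv_iff_bracket_eq_bot R L L).1 ha_center, sup_bot_eq]
      _ ≤ m := lie_le_right _ _
  intro hle
  exact ha (eq_bot_iff.2 (hinf ▸ le_inf ((ha_center.trans hle).trans hlie_top) le_rfl))

def LieIdeal.ofLeCenter (A : Submodule R L) (hA : A ≤ (center R L).toSubmodule) :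
    LieIdeal R L :=
  { A with lie_mem := fun {x _} hz => by rw [hA hz x]; exact A.zero_mem }

def LieIdeal.ofLieTopLe (M : Submodule R L)
    (hM : (⁅(⊤ : LieIdeal R L), ⊤⁆ : LieIdeal R L).toSubmodule ≤ M) : LieIdeal R L :=
  { M with lie_mem := fun {x y} _ => hM (lie_mem_lie (mem_top x) (mem_top y)) }

theorem hasAbelianFactor_of_isCompl {A M : Submodule R L} (hA0 : A ≠ ⊥)
    (hA : A ≤ (center R L).toSubmodule)
    (hM : (⁅(⊤ : LieIdeal R L), ⊤⁆ : LieIdeal R L).toSubmodule ≤ M) (hMA : IsCompl M A) :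
    HasAbelianFactor R L := by
  refine ⟨LieIdeal.ofLeCenter A hA, LieIdeal.ofLieTopLe M hM, ?_, ?_, ?_, ?_⟩
  · rwa [Ne, ← toSubmodule_inj, bot_toSubmodule]
  · intro x hx y _
    rw [← lie_skew, hA hx y, neg_zero]
  · rw [← toSubmodule_inj, sup_toSubmodule, top_toSubmodule]
    exact hMA.sup_eq_top
  · rw [← toSubmodule_inj, inf_toSubmodule, bot_toSubmodule]
    exact hMA.inf_eq_bot

end CommRing

theorem hasAbelianFactor_iff_not_center_le_lie_top {K L : Type*} [Field K] [LieRing L]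
    [LieAlgebra K L] : HasAbelianFactor K L ↔ ¬ center K L ≤ ⁅(⊤ : LieIdeal K L), ⊤⁆ := by
  refine ⟨HasAbelianFactor.not_center_le_lie_top, fun h => ?_⟩
  obtain ⟨z, hz, hzD⟩ := SetLike.not_le_iff_exists.1 h
  have hz0 : z ≠ 0 := fun h0 => hzD (h0 ▸ zero_mem _)
  obtain ⟨M, hDM, hMz⟩ := (Submodule.disjoint_span_singleton_of_notMem
    (s := (⁅(⊤ : LieIdeal K L), ⊤⁆ : LieIdeal K L).toSubmodule) hzD).exists_isCompl
  refine hasAbelianFactor_of_isCompl ?_ ?_ hDM hMz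
  · simpa using hz0
  · exact (Submodule.span_singleton_le_iff_mem _ _).2 hz

section BaseChange

variable {R A L : Type*} [CommRing R] [CommRing A] [Algebra R A] [LieRing L] [LieAlgebra R L]

theorem lid_rTensor_lie_one_tmul (f : A →ₗ[R] R) (y : L) (t : A ⊗[R] L) :
    TensorProduct.lid R L (f.rTensor L ⁅(1 : A) ⊗ₜ[R] y, t⁆) =
      ⁅y, TensorProduct.lid R L (f.rTensor L t)⁆ := by
  induction t using TensorProduct.induction_on with
  | zero => simp
  | tmul c x => simp [ExtendScalars.bracket_tmul]
  | add s t hs ht => simp [lie_add, hs, ht]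

theorem center_baseChange_le [Module.Free R A] :
    center A (A ⊗[R] L) ≤ (center R L).baseChange A := by
  intro t ht
  classical
  let ℬ := Module.Free.chooseBasis R A
  have hcoord : ∀ i, TensorProduct.equivFinsuppOfBasisLeft ℬ t i ∈ center R L := fun i y => by
    rw [TensorProduct.equivFinsuppOfBasisLeft_apply, ← lid_rTensor_lie_one_tmul,
      (mem_maxTrivSubmodule A _ _ t).1 ht, map_zero, map_zero]
  rw [← (TensorProduct.equivFinsuppOfBasisLeft ℬ).symm_apply_apply t,
    TensorProduct.equivFinsuppOfBasisLeft_symm_apply]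
  exact Submodule.finsuppSum_mem _ _ _ _ fun i _ => tmul_mem_baseChange_of_mem _ (hcoord i)

end BaseChange

theorem HasAbelianFactor.of_baseChange {K A L : Type*} [Field K] [CommRing A] [Algebra K A]
    [LieRing L] [LieAlgebra K L] (h : HasAbelianFactor A (A ⊗[K] L)) : HasAbelianFactor K L := by
  rw [hasAbelianFactor_iff_not_center_le_lie_top]
  intro hle
  apply h.not_center_le_lie_top
  calc center A (A ⊗[K] L) ≤ (center K L).baseChange A := center_baseChange_le
    _ ≤ (⁅(⊤ : LieIdeal K L), ⊤⁆ : LieIdeal K L).baseChange A := Submodule.baseChange_mono A hle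
    _ = ⁅⊤, ⊤⁆ := by rw [lie_baseChange, baseChange_top]

theorem abelian_factor_of_complexification_general (L : Type*) [LieRing L] [LieAlgebra ℝ L]
    (h : HasAbelianFactor ℂ (ℂ ⊗[ℝ] L)) :
    HasAbelianFactor ℝ L :=
  h.of_baseChange

/-- If the complexification `ℂ ⊗[ℝ] L` of a finite-dimensional real Lie algebra `L` has a
nonzero abelian factor, then `L` has a nonzero abelian factor. -/
theorem abelian_factor_of_complexification (L : Type*) [LieRing L] [LieAlgebra ℝ L]
    [Module.Finite ℝ L] (h : HasAbelianFactor ℂ (ℂ ⊗[ℝ] L)) :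
    HasAbelianFactor ℝ L :=
  abelian_factor_of_complexification_general L h
end

section
/- Let λ₁, λ₂, λ₃ ∈ ℂ be the three roots of X³ − 3X + 1. Then for all i ≠ j, the products λ_i·λ_j and λ_i²·λ_j are irrational algebraic units whose minimal polynomials over ℚ have degree 3; moreover none of the numbers λ_i, λ_i·λ_j and λ_i²·λ_j (i ≠ j) has absolute value 1. -/
/-!
Each root `λ` of `X³ − 3X + 1` is an algebraic unit, with `λ⁻¹ = 3 − λ²`, so all the products
are units. For distinct roots `a, b, c` Vieta gives `ab = −c⁻¹`, a root of `X³ + 3X² − 1`. The map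
`λ ↦ λ² − 2` permutes the roots without fixed points, so `b = a² − 2` or `c = a² − 2`, and
accordingly `a²b` is a root of `X³ − 6X² + 3X + 1` or of `X³ + 3X² − 6X + 1`. These monic
integer cubics have constant term `±1` and do not vanish at `±1`, so they have no rational root;
being cubics they are irreducible over `ℚ`, which gives degree `3` and irrationality. Finally the
polynomial changes sign on `(−2, 0)`, `(0, 1)` and `(1, 2)`, so all its roots are real; a real
number of absolute value `1` is `±1`, which is rational.
-/

open Polynomial

section Roots

variable {R : Type*} [CommRing R] {a b c : R}

theorem vieta_of_roots [IsDomain R] (ha : a ^ 3 - 3 * a + 1 = 0)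
    (hb : b ^ 3 - 3 * b + 1 = 0) (hc : c ^ 3 - 3 * c + 1 = 0)
    (hab : a ≠ b) (hac : a ≠ c) (hbc : b ≠ c) :
    a + b + c = 0 ∧ a * b + b * c + c * a = -3 ∧ a * b * c = -1 := by
  have hab' : a ^ 2 + a * b + b ^ 2 - 3 = 0 := by
    refine (mul_eq_zero.mp ?_).resolve_left (sub_ne_zero.mpr hab)
    linear_combination ha - hb
  have hac' : a ^ 2 + a * c + c ^ 2 - 3 = 0 := by
    refine (mul_eq_zero.mp ?_).resolve_left (sub_ne_zero.mpr hac)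
    linear_combination ha - hc
  have hsum : a + b + c = 0 := by
    refine (mul_eq_zero.mp ?_).resolve_left (sub_ne_zero.mpr hbc)
    linear_combination hab' - hac'
  have hsum₂ : a * b + b * c + c * a = -3 := by linear_combination -hab' + (a + b) * hsum
  exact ⟨hsum, hsum₂, by linear_combination hc + c * hsum₂ - c ^ 2 * hsum⟩

theorem eq_or_eq_or_eq_of_roots [IsDomain R] (ha : a ^ 3 - 3 * a + 1 = 0)
    (hb : b ^ 3 - 3 * b + 1 = 0) (hc : c ^ 3 - 3 * c + 1 = 0)
    (hab : a ≠ b) (hac : a ≠ c) (hbc : b ≠ c) {x : R}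
    (hx : x ^ 3 - 3 * x + 1 = 0) : x = a ∨ x = b ∨ x = c := by
  obtain ⟨hsum, hsum₂, hprod⟩ := vieta_of_roots ha hb hc hab hac hbc
  have hfactor : (x - a) * (x - b) * (x - c) = 0 := by
    linear_combination hx - x ^ 2 * hsum + x * hsum₂ - hprod
  simp only [mul_eq_zero, sub_eq_zero] at hfactor
  tauto

theorem sq_sub_two_root (ha : a ^ 3 - 3 * a + 1 = 0) :
    (a ^ 2 - 2) ^ 3 - 3 * (a ^ 2 - 2) + 1 = 0 := by
  linear_combination (a ^ 3 - 3 * a - 1) * ha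

theorem sq_sub_two_ne_self [IsDomain R] [CharZero R] (ha : a ^ 3 - 3 * a + 1 = 0) :
    a ^ 2 - 2 ≠ a := by
  intro h
  rcases mul_eq_zero.mp (by linear_combination h : (a - 2) * (a + 1) = 0) with h | h
  · have : (3 : R) = 0 := by linear_combination ha - (a ^ 2 + 2 * a + 1) * h
    norm_num at this
  · have : (3 : R) = 0 := by linear_combination ha - (a ^ 2 - a - 2) * h
    norm_num at this

theorem mul_root_of_roots (hc : c ^ 3 - 3 * c + 1 = 0) (habc : a * b * c = -1) :
    (a * b) ^ 3 + 3 * (a * b) ^ 2 - 1 = 0 := by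
  linear_combination
    (a * b) ^ 3 * hc + (-(a * b * c) ^ 2 + a * b * c - 1 + 3 * (a * b) ^ 2) * habc

theorem sq_mul_root_of_roots [IsDomain R] [CharZero R] (ha : a ^ 3 - 3 * a + 1 = 0)
    (hb : b ^ 3 - 3 * b + 1 = 0) (hc : c ^ 3 - 3 * c + 1 = 0)
    (hab : a ≠ b) (hac : a ≠ c) (hbc : b ≠ c) :
    (a ^ 2 * b) ^ 3 - 6 * (a ^ 2 * b) ^ 2 + 3 * (a ^ 2 * b) + 1 = 0 ∨
      (a ^ 2 * b) ^ 3 + 3 * (a ^ 2 * b) ^ 2 - 6 * (a ^ 2 * b) + 1 = 0 := by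
  rcases eq_or_eq_or_eq_of_roots ha hb hc hab hac hbc (sq_sub_two_root ha) with h | h | h
  · exact absurd h (sq_sub_two_ne_self ha)
  · left
    have hy : a ^ 2 * b = a ^ 2 - a := by rw [← h]; linear_combination a * ha
    rw [hy]
    linear_combination (a ^ 3 - 3 * a ^ 2 + 1) * ha
  · right
    have hb' : b = -a ^ 2 - a + 2 := by
      linear_combination (vieta_of_roots ha hb hc hab hac hbc).1 + h
    have hy : a ^ 2 * b = -a ^ 2 - 2 * a + 1 := by
      rw [hb']; linear_combination (-a - 1) * ha
    rw [hy]
    linear_combination (-1 - 9 * a - 6 * a ^ 2 - a ^ 3) * ha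

end Roots

section Units

variable {K : Type*} [Field K] {x : K}

theorem isIntegral_of_root (hx : x ^ 3 - 3 * x + 1 = 0) : IsIntegral ℤ x :=
  ⟨X ^ 3 - 3 * X + 1, by monicity!, by simpa using hx⟩

theorem isIntegral_inv_of_root (hx : x ^ 3 - 3 * x + 1 = 0) : IsIntegral ℤ x⁻¹ := by
  rw [inv_eq_of_mul_eq_one_right (by linear_combination -hx : x * (3 - x ^ 2) = 1)]
  exact (isIntegral_natCast 3).sub ((isIntegral_of_root hx).pow 2)

end Units

theorem irreducible_cubic_of_isUnit {u v w : ℤ} (hw : IsUnit w) (h₁ : 1 + u + v + w ≠ 0)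
    (h₂ : -1 + u - v + w ≠ 0) :
    Irreducible (X ^ 3 + C (u : ℚ) * X ^ 2 + C (v : ℚ) * X + C (w : ℚ)) := by
  have hdeg : (X ^ 3 + C (u : ℚ) * X ^ 2 + C (v : ℚ) * X + C (w : ℚ)).natDegree = 3 := by
    compute_degree!
  rw [irreducible_iff_roots_eq_zero_of_degree_le_three (by omega) (by omega),
    Multiset.eq_zero_iff_forall_notMem]
  intro t ht
  rw [mem_roots (ne_zero_of_natDegree_gt (n := 0) (by omega))] at ht
  obtain ⟨m, rfl, hdvd⟩ := exists_integer_of_is_root_of_monic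
    (p := X ^ 3 + C u * X ^ 2 + C v * X + C w) (by monicity!) (r := t) (by simpa using ht)
  simp only [algebraMap_int_eq, eq_intCast] at ht
  rcases Int.isUnit_iff.mp (isUnit_of_dvd_unit (by simpa using hdvd) hw) with rfl | rfl
  all_goals simp at ht
  · exact h₁ (by exact_mod_cast (by linear_combination ht : (1 : ℚ) + u + v + w = 0))
  · exact h₂ (by exact_mod_cast (by linear_combination ht : (-1 : ℚ) + u - v + w = 0))

theorem natDegree_minpoly_eq_three {K : Type*} [Field K] [CharZero K] {x : K} {u v w : ℤ}
    (hx : x ^ 3 + u * x ^ 2 + v * x + w = 0) (hw : IsUnit w) (h₁ : 1 + u + v + w ≠ 0)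
    (h₂ : -1 + u - v + w ≠ 0) : (minpoly ℚ x).natDegree = 3 := by
  rw [← minpoly.eq_of_irreducible_of_monic (irreducible_cubic_of_isUnit hw h₁ h₂)
    (by simpa using hx) (by monicity!)]
  compute_degree!

section Degrees

variable {K : Type*} [Field K] [CharZero K] {a b c : K}

theorem natDegree_minpoly_of_root (ha : a ^ 3 - 3 * a + 1 = 0) : (minpoly ℚ a).natDegree = 3 :=
  natDegree_minpoly_eq_three (u := 0) (v := -3) (w := 1) (by push_cast; linear_combination ha)
    isUnit_one (by norm_num) (by norm_num)

theorem natDegree_minpoly_mul_of_roots (ha : a ^ 3 - 3 * a + 1 = 0)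
    (hb : b ^ 3 - 3 * b + 1 = 0) (hc : c ^ 3 - 3 * c + 1 = 0)
    (hab : a ≠ b) (hac : a ≠ c) (hbc : b ≠ c) :
    (minpoly ℚ (a * b)).natDegree = 3 :=
  natDegree_minpoly_eq_three (u := 3) (v := 0) (w := -1)
    (by
      push_cast
      linear_combination mul_root_of_roots hc (vieta_of_roots ha hb hc hab hac hbc).2.2)
    isUnit_one.neg (by norm_num) (by norm_num)

theorem natDegree_minpoly_sq_mul_of_roots (ha : a ^ 3 - 3 * a + 1 = 0)
    (hb : b ^ 3 - 3 * b + 1 = 0) (hc : c ^ 3 - 3 * c + 1 = 0)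
    (hab : a ≠ b) (hac : a ≠ c) (hbc : b ≠ c) :
    (minpoly ℚ (a ^ 2 * b)).natDegree = 3 := by
  rcases sq_mul_root_of_roots ha hb hc hab hac hbc with h | h
  · exact natDegree_minpoly_eq_three (u := -6) (v := 3) (w := 1)
      (by push_cast; linear_combination h) isUnit_one (by norm_num) (by norm_num)
  · exact natDegree_minpoly_eq_three (u := 3) (v := -6) (w := 1)
      (by push_cast; linear_combination h) isUnit_one (by norm_num) (by norm_num)

end Degrees

theorem not_exists_rat_eq_of_natDegree_minpoly_ne_one {K : Type*} [Field K] [CharZero K] {x : K}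
    (h : (minpoly ℚ x).natDegree ≠ 1) : ¬∃ q : ℚ, x = q :=
  fun ⟨q, hq⟩ => h (minpoly.natDegree_eq_one_iff.mpr ⟨q, by simp [hq]⟩)

theorem norm_ne_one_of_im_eq_zero {x : ℂ} (hx : x.im = 0) (hirr : ¬∃ q : ℚ, x = q) :
    ‖x‖ ≠ 1 := by
  have hre : x = (x.re : ℂ) := Complex.ext rfl (by simp [hx])
  rw [hre, Complex.norm_real, Real.norm_eq_abs]
  intro h
  rcases (abs_eq zero_le_one).mp h with h | h
  · exact hirr ⟨1, by rw [hre, h]; simp⟩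
  · exact hirr ⟨-1, by rw [hre, h]; simp⟩

theorem exists_three_real_roots :
    ∃ r₁ r₂ r₃ : ℝ, r₁ ^ 3 - 3 * r₁ + 1 = 0 ∧ r₂ ^ 3 - 3 * r₂ + 1 = 0 ∧
      r₃ ^ 3 - 3 * r₃ + 1 = 0 ∧ r₁ < r₂ ∧ r₂ < r₃ := by
  have hf : Continuous fun r : ℝ => r ^ 3 - 3 * r + 1 := by fun_prop
  obtain ⟨r₁, ⟨-, h₁⟩, e₁⟩ := intermediate_value_Ioo (by norm_num : (-2 : ℝ) ≤ 0)
    hf.continuousOn (show (0 : ℝ) ∈ Set.Ioo _ _ by norm_num)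
  obtain ⟨r₂, ⟨h₂, h₂'⟩, e₂⟩ := intermediate_value_Ioo' (by norm_num : (0 : ℝ) ≤ 1)
    hf.continuousOn (show (0 : ℝ) ∈ Set.Ioo _ _ by norm_num)
  obtain ⟨r₃, ⟨h₃, -⟩, e₃⟩ := intermediate_value_Ioo (by norm_num : (1 : ℝ) ≤ 2)
    hf.continuousOn (show (0 : ℝ) ∈ Set.Ioo _ _ by norm_num)
  exact ⟨r₁, r₂, r₃, e₁, e₂, e₃, h₁.trans h₂, h₂'.trans h₃⟩

theorem im_eq_zero_of_root {z : ℂ} (hz : z ^ 3 - 3 * z + 1 = 0) : z.im = 0 := by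
  obtain ⟨r₁, r₂, r₃, e₁, e₂, e₃, h₁₂, h₂₃⟩ := exists_three_real_roots
  have hroot (r : ℝ) (hr : r ^ 3 - 3 * r + 1 = 0) : (r : ℂ) ^ 3 - 3 * r + 1 = 0 := by
    exact_mod_cast hr
  rcases eq_or_eq_or_eq_of_roots (hroot r₁ e₁) (hroot r₂ e₂) (hroot r₃ e₃)
    (by exact_mod_cast h₁₂.ne) (by exact_mod_cast (h₁₂.trans h₂₃).ne)
    (by exact_mod_cast h₂₃.ne) hz with rfl | rfl | rfl <;> simp

/-- Let `λ₀, λ₁, λ₂` be the three (distinct) complex roots of `X³ − 3X + 1`. For all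
`i ≠ j`, the products `λᵢ·λⱼ` and `λᵢ²·λⱼ` are irrational algebraic units whose minimal
polynomials over `ℚ` have degree `3`; moreover none of the numbers `λᵢ`, `λᵢ·λⱼ` and
`λᵢ²·λⱼ` (`i ≠ j`) has absolute value `1`. -/
theorem products_of_cubic_roots_are_units (l : Fin 3 → ℂ)
    (hroot : ∀ i, (l i) ^ 3 - 3 * (l i) + 1 = 0) (hinj : Function.Injective l) :
    (∀ i j, i ≠ j →
      (IsIntegral ℤ (l i * l j) ∧ IsIntegral ℤ (l i * l j)⁻¹ ∧
        (¬ ∃ q : ℚ, l i * l j = (q : ℂ)) ∧ (minpoly ℚ (l i * l j)).natDegree = 3) ∧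
      (IsIntegral ℤ ((l i) ^ 2 * l j) ∧ IsIntegral ℤ ((l i) ^ 2 * l j)⁻¹ ∧
        (¬ ∃ q : ℚ, (l i) ^ 2 * l j = (q : ℂ)) ∧
        (minpoly ℚ ((l i) ^ 2 * l j)).natDegree = 3)) ∧
    (∀ i, ‖l i‖ ≠ 1) ∧
    (∀ i j, i ≠ j →
      ‖l i * l j‖ ≠ 1 ∧ ‖(l i) ^ 2 * l j‖ ≠ 1) := by
  have irrational (x : ℂ) (h : (minpoly ℚ x).natDegree = 3) : ¬∃ q : ℚ, x = q :=
    not_exists_rat_eq_of_natDegree_minpoly_ne_one (by omega)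
  have hint i := isIntegral_of_root (hroot i)
  have hinv i := isIntegral_inv_of_root (hroot i)
  have hreal i := im_eq_zero_of_root (hroot i)
  have hdeg i j (hij : i ≠ j) :
      (minpoly ℚ (l i * l j)).natDegree = 3 ∧ (minpoly ℚ (l i ^ 2 * l j)).natDegree = 3 := by
    obtain ⟨k, hik, hjk⟩ : ∃ k, i ≠ k ∧ j ≠ k := by revert i j; decide
    exact ⟨natDegree_minpoly_mul_of_roots (hroot i) (hroot j) (hroot k)
        (hinj.ne hij) (hinj.ne hik) (hinj.ne hjk),
      natDegree_minpoly_sq_mul_of_roots (hroot i) (hroot j) (hroot k)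
        (hinj.ne hij) (hinj.ne hik) (hinj.ne hjk)⟩
  refine ⟨fun i j hij => ⟨⟨(hint i).mul (hint j), ?_, irrational _ (hdeg i j hij).1,
      (hdeg i j hij).1⟩,
    ⟨((hint i).pow 2).mul (hint j), ?_, irrational _ (hdeg i j hij).2, (hdeg i j hij).2⟩⟩,
    fun i => norm_ne_one_of_im_eq_zero (hreal i)
      (irrational _ (natDegree_minpoly_of_root (hroot i))),
    fun i j hij => ⟨norm_ne_one_of_im_eq_zero ?_ (irrational _ (hdeg i j hij).1),
      norm_ne_one_of_im_eq_zero ?_ (irrational _ (hdeg i j hij).2)⟩⟩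
  · rw [mul_inv]; exact (hinv i).mul (hinv j)
  · rw [mul_inv, ← inv_pow]; exact ((hinv i).pow 2).mul (hinv j)
  · simp [hreal i, hreal j]
  · simp [pow_two, hreal i, hreal j]
end
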